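/- arXiv:1305.6843 — 6 statements merged into one kernel-verified Lean document; each statement's English description precedes it below -/
import Mathlib

section
/- Let S = M(G; I, Λ; P) be a finite Rees matrix semigroup with normalized nonsingular matrix P (no two rows equal, no two columns equal). Then for every pair of distinct elements s_1, s_2 ∈ S there exists a term t(x), built from one variable x and constants of S, such that t(s) ∈ Γ = {(1,g,1) : g ∈ G} for all s ∈ S, and t(s_1) ≠ t(s_2). -/
namespace Stmt

/-- Evaluation of a single letter (variable or constant). -/
def evalL {S : Type*} {n : ℕ} (p : Fin n → S) : Fin n ⊕ S → S
  | Sum.inl i => p i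
  | Sum.inr s => s

/-- A semigroup term with constants: a nonempty word in variables `x₁,…,xₙ`
and constants from `S` (head letter together with the remaining letters). -/
abbrev SgTerm (S : Type*) (n : ℕ) : Type _ := (Fin n ⊕ S) × List (Fin n ⊕ S)

/-- Value of a term at a point, w.r.t. an explicit binary operation `mul`. -/
def SgTerm.eval {S : Type*} {n : ℕ} (mul : S → S → S) (t : SgTerm S n)
    (p : Fin n → S) : S :=
  t.2.foldl (fun a l => mul a (evalL p l)) (evalL p t.1)

/-- `Y ⊆ Sⁿ` is algebraic: it is the solution set of a system of equations
`t(X) = s(X)` between semigroup terms with constants. -/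
def IsAlgebraic {S : Type*} {n : ℕ} (mul : S → S → S) (Y : Set (Fin n → S)) : Prop :=
  ∃ Sys : Set (SgTerm S n × SgTerm S n),
    Y = {p | ∀ e ∈ Sys, SgTerm.eval mul e.1 p = SgTerm.eval mul e.2 p}

/-- `S` is an equational domain: every finite union of algebraic sets is algebraic. -/
def IsEqDomain (S : Type*) (mul : S → S → S) : Prop :=
  ∀ (n m : ℕ) (Y : Fin m → Set (Fin n → S)),
    (∀ i, IsAlgebraic mul (Y i)) → IsAlgebraic mul (⋃ i, Y i)

/-- Multiplication of the Rees matrix semigroup `M(G; I, Λ; P)` on `Λ × G × I`: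
`(λ,g,i)(μ,h,j) = (λ, g · p_{iμ} · h, j)`. -/
def reesMul {G I Λ : Type*} [Group G] (P : I → Λ → G) (a b : Λ × G × I) : Λ × G × I :=
  (a.1, a.2.1 * P a.2.2 b.1 * b.2.1, b.2.2)

/-- `P` is normalized w.r.t. the distinguished indices `i0 ∈ I`, `l0 ∈ Λ`:
its first row and first column consist of identity elements. -/
def Normalized {G I Λ : Type*} [Group G] (P : I → Λ → G) (i0 : I) (l0 : Λ) : Prop :=
  (∀ i, P i l0 = 1) ∧ (∀ l, P i0 l = 1)

/-- `P` is nonsingular: no two equal rows and no two equal columns. -/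
def Nonsingular {G I Λ : Type*} [Group G] (P : I → Λ → G) : Prop :=
  (∀ i j : I, (∀ l, P i l = P j l) → i = j) ∧
  (∀ l m : Λ, (∀ i, P i l = P i m) → l = m)

/-- If the normalized matrix `P` of a finite Rees matrix semigroup is
nonsingular, then any two distinct elements are separated by a one-variable
term all of whose values lie in `Γ = {(1,g,1) : g ∈ G}`. -/
theorem exists_separating_gamma_term (G I Λ : Type*) [Group G] [Fintype G]
    [Fintype I] [Fintype Λ] (P : I → Λ → G) (i0 : I) (l0 : Λ)
    (hP : Normalized P i0 l0) (hns : Nonsingular P)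
    (s1 s2 : Λ × G × I) (h : s1 ≠ s2) :
    ∃ t : SgTerm (Λ × G × I) 1,
      (∀ s : Λ × G × I, ∃ g : G,
        SgTerm.eval (reesMul P) t (fun _ => s) = (l0, g, i0)) ∧
      SgTerm.eval (reesMul P) t (fun _ => s1) ≠
        SgTerm.eval (reesMul P) t (fun _ => s2) := by
  obtain ⟨hcol, hrow⟩ := hP
  obtain ⟨hnsI, hnsL⟩ := hns
  obtain ⟨l1, g1, i1⟩ := s1
  obtain ⟨l2, g2, i2⟩ := s2
  have key : ∃ i μ, P i l1 * g1 * P i1 μ ≠ P i l2 * g2 * P i2 μ := by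
    by_contra hc
    push_neg at hc
    have hg : g1 = g2 := by
      have := hc i0 l0
      simpa [hrow, hcol] using this
    have hi : i1 = i2 := by
      apply hnsI; intro μ
      have := hc i0 μ
      simp only [hrow, one_mul, hg] at this
      exact mul_left_cancel this
    have hl : l1 = l2 := by
      apply hnsL; intro i
      have := hc i l0
      simp only [hcol, mul_one, hg] at this
      exact mul_right_cancel this
    exact h (by simp [hg, hi, hl])
  obtain ⟨i, μ, hiμ⟩ := key
  refine ⟨(Sum.inr (l0, 1, i), [Sum.inl 0, Sum.inr (μ, 1, i0)]), ?_, ?_⟩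
  · rintro ⟨l, g, j⟩
    exact ⟨P i l * g * P j μ, by simp [SgTerm.eval, evalL, reesMul]⟩
  · simp only [SgTerm.eval, evalL, reesMul, List.foldl]
    simp only [one_mul, mul_one]
    intro heq
    exact hiμ (congrArg (fun z => z.2.1) heq)

end Stmt
end

section
/- Let S = M(G; I, Λ; P) be a Rees matrix semigroup with normalized matrix P whose columns λ and μ are equal, and let s_1 = (λ,1,1), s_2 = (μ,1,1). Then for every term t(x) beginning with the variable x, say t(x) = x^n t'(x) with t' beginning with a constant (or t' empty), there exist g ∈ G and k ∈ I with t(s_1) = (λ,g,k) and t(s_2) = (μ,g,k); that is, the values differ only in their first index. -/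
namespace Stmt

lemma fold_aux {G I Λ : Type*} [Group G] (P : I → Λ → G)
    (i0 : I) (l μ : Λ) (hcol : ∀ i, P i l = P i μ)
    (L : List (Fin 1 ⊕ (Λ × G × I))) :
    ∀ (g : G) (k : I), ∃ (g' : G) (k' : I),
      L.foldl (fun a x => reesMul P a (evalL (fun _ => ((l, 1, i0) : Λ × G × I)) x)) (l, g, k)
        = (l, g', k') ∧
      L.foldl (fun a x => reesMul P a (evalL (fun _ => ((μ, 1, i0) : Λ × G × I)) x)) (μ, g, k)
        = (μ, g', k') := by
  induction L with
  | nil => exact fun g k => ⟨g, k, rfl, rfl⟩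
  | cons x L ih =>
    intro g k
    cases x with
    | inl i =>
      obtain ⟨g', k', h1, h2⟩ := ih (g * P k l * 1) i0
      refine ⟨g', k', ?_, ?_⟩
      · simpa [reesMul, evalL] using h1
      · simpa [reesMul, evalL, ← hcol k] using h2
    | inr c =>
      obtain ⟨g', k', h1, h2⟩ := ih (g * P k c.1 * c.2.1) c.2.2
      exact ⟨g', k', by simpa [reesMul, evalL] using h1,
        by simpa [reesMul, evalL] using h2⟩

/-- If columns `λ` and `μ` of the normalized matrix `P` are equal, then for any
term beginning with the variable `x`, the values at `s₁ = (λ,1,1)` and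
`s₂ = (μ,1,1)` are `(λ,g,k)` and `(μ,g,k)` respectively: they differ only in
the first index. -/
theorem var_head_term_values_on_equal_columns (G I Λ : Type*) [Group G]
    (P : I → Λ → G) (i0 : I) (l0 : Λ) (hP : Normalized P i0 l0)
    (l μ : Λ) (hcol : ∀ i, P i l = P i μ)
    (t : SgTerm (Λ × G × I) 1) (hv : t.1 = Sum.inl 0) :
    ∃ (g : G) (k : I),
      SgTerm.eval (reesMul P) t (fun _ => ((l, 1, i0) : Λ × G × I)) = (l, g, k) ∧
      SgTerm.eval (reesMul P) t (fun _ => ((μ, 1, i0) : Λ × G × I)) = (μ, g, k) := by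
  obtain ⟨g', k', h1, h2⟩ := fold_aux P i0 l μ hcol t.2 1 i0
  refine ⟨g', k', ?_, ?_⟩
  · simpa [SgTerm.eval, hv, evalL] using h1
  · simpa [SgTerm.eval, hv, evalL] using h2

end Stmt
end

section
/- Let S = M(G; I, Λ; P) be a finite Rees matrix semigroup with normalized matrix P. If P is singular (has two equal rows or two equal columns), then S is not an equational domain: the set M = {(x,y) ∈ S^2 : x = (λ,1,1) or y = (λ,1,1)} (for suitable index λ) is not algebraic over S. -/
namespace Stmt

set_option linter.unusedSectionVars false

section Aux

variable {G I Λ : Type*} [Group G] (P : I → Λ → G) {n : ℕ}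

lemma fold_fst (p : Fin n → Λ × G × I) :
    ∀ (ls : List (Fin n ⊕ (Λ × G × I))) (a : Λ × G × I),
      (ls.foldl (fun a u => reesMul P a (evalL p u)) a).1 = a.1
  | [], _ => rfl
  | u :: ls, a => by
      rw [List.foldl_cons, fold_fst p ls]
      rfl

lemma eval_fst (t : SgTerm (Λ × G × I) n) (p : Fin n → Λ × G × I) :
    (SgTerm.eval (reesMul P) t p).1 = (evalL p t.1).1 := fold_fst P p t.2 _

lemma fold_last (p : Fin n → Λ × G × I) :
    ∀ (ls : List (Fin n ⊕ (Λ × G × I))) (a : Λ × G × I) (d : Fin n ⊕ (Λ × G × I)),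
      a.2.2 = (evalL p d).2.2 →
      (ls.foldl (fun a u => reesMul P a (evalL p u)) a).2.2 = (evalL p (ls.getLastD d)).2.2
  | [], a, d, h => h
  | u :: ls, a, d, h => by
      rw [List.foldl_cons, List.getLastD_cons]
      exact fold_last p ls _ u rfl

lemma eval_last (t : SgTerm (Λ × G × I) n) (p : Fin n → Λ × G × I) :
    (SgTerm.eval (reesMul P) t p).2.2 = (evalL p (t.2.getLastD t.1)).2.2 :=
  fold_last P p t.2 _ t.1 rfl

lemma letter_col {p q : Fin n → Λ × G × I}
    (hpq : ∀ k, (p k).2 = (q k).2 ∧ ∀ i, P i (p k).1 = P i (q k).1)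
    (u : Fin n ⊕ (Λ × G × I)) :
    (evalL p u).2 = (evalL q u).2 ∧ ∀ i, P i (evalL p u).1 = P i (evalL q u).1 := by
  cases u with
  | inl k => exact hpq k
  | inr s => exact ⟨rfl, fun _ => rfl⟩

lemma fold_col {p q : Fin n → Λ × G × I}
    (hpq : ∀ k, (p k).2 = (q k).2 ∧ ∀ i, P i (p k).1 = P i (q k).1) :
    ∀ (ls : List (Fin n ⊕ (Λ × G × I))) (a b : Λ × G × I), a.2 = b.2 →
      (ls.foldl (fun a u => reesMul P a (evalL p u)) a).2
        = (ls.foldl (fun a u => reesMul P a (evalL q u)) b).2 := by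
  intro ls
  induction ls with
  | nil => intro a b h; exact h
  | cons u ls ih =>
      intro a b h
      simp only [List.foldl_cons]
      apply ih
      obtain ⟨h1, h2⟩ := letter_col P hpq u
      show (a.2.1 * P a.2.2 (evalL p u).1 * (evalL p u).2.1, (evalL p u).2.2)
        = (b.2.1 * P b.2.2 (evalL q u).1 * (evalL q u).2.1, (evalL q u).2.2)
      rw [h1, h, h2]

lemma eval_col {p q : Fin n → Λ × G × I}
    (hpq : ∀ k, (p k).2 = (q k).2 ∧ ∀ i, P i (p k).1 = P i (q k).1)
    (t : SgTerm (Λ × G × I) n) :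
    (SgTerm.eval (reesMul P) t p).2 = (SgTerm.eval (reesMul P) t q).2 :=
  fold_col P hpq t.2 _ _ (letter_col P hpq t.1).1

lemma letter_row {p q : Fin n → Λ × G × I}
    (hpq : ∀ k, (p k).1 = (q k).1 ∧ (p k).2.1 = (q k).2.1 ∧
      ∀ m, P (p k).2.2 m = P (q k).2.2 m)
    (u : Fin n ⊕ (Λ × G × I)) :
    (evalL p u).1 = (evalL q u).1 ∧ (evalL p u).2.1 = (evalL q u).2.1 ∧
      ∀ m, P (evalL p u).2.2 m = P (evalL q u).2.2 m := by
  cases u with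
  | inl k => exact hpq k
  | inr s => exact ⟨rfl, rfl, fun _ => rfl⟩

lemma fold_row {p q : Fin n → Λ × G × I}
    (hpq : ∀ k, (p k).1 = (q k).1 ∧ (p k).2.1 = (q k).2.1 ∧
      ∀ m, P (p k).2.2 m = P (q k).2.2 m) :
    ∀ (ls : List (Fin n ⊕ (Λ × G × I))) (a b : Λ × G × I),
      a.1 = b.1 → a.2.1 = b.2.1 → (∀ m, P a.2.2 m = P b.2.2 m) →
      (ls.foldl (fun a u => reesMul P a (evalL p u)) a).1
        = (ls.foldl (fun a u => reesMul P a (evalL q u)) b).1 ∧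
      (ls.foldl (fun a u => reesMul P a (evalL p u)) a).2.1
        = (ls.foldl (fun a u => reesMul P a (evalL q u)) b).2.1 ∧
      ∀ m, P (ls.foldl (fun a u => reesMul P a (evalL p u)) a).2.2 m
        = P (ls.foldl (fun a u => reesMul P a (evalL q u)) b).2.2 m := by
  intro ls
  induction ls with
  | nil => intro a b h1 h2 h3; exact ⟨h1, h2, h3⟩
  | cons u ls ih =>
      intro a b h1 h2 h3
      simp only [List.foldl_cons]
      obtain ⟨g1, g2, g3⟩ := letter_row P hpq u
      exact ih _ _ h1 (by simp only [reesMul]; rw [h2, h3, g1, g2]) g3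

lemma eval_row {p q : Fin n → Λ × G × I}
    (hpq : ∀ k, (p k).1 = (q k).1 ∧ (p k).2.1 = (q k).2.1 ∧
      ∀ m, P (p k).2.2 m = P (q k).2.2 m)
    (t : SgTerm (Λ × G × I) n) :
    (SgTerm.eval (reesMul P) t p).1 = (SgTerm.eval (reesMul P) t q).1 ∧
    (SgTerm.eval (reesMul P) t p).2.1 = (SgTerm.eval (reesMul P) t q).2.1 := by
  obtain ⟨h1, h2, h3⟩ := letter_row P hpq t.1
  obtain ⟨r1, r2, _⟩ := fold_row P hpq t.2 _ _ h1 h2 h3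
  exact ⟨r1, r2⟩

lemma not_alg_col (l μ : Λ) (i0 : I) (hne : l ≠ μ) (hcol : ∀ i, P i l = P i μ) :
    ¬ IsAlgebraic (reesMul P)
      {p : Fin 2 → Λ × G × I | p 0 = (l, 1, i0) ∨ p 1 = (l, 1, i0)} := by
  rintro ⟨Sys, hSys⟩
  set a : Λ × G × I := (l, 1, i0) with ha
  set a' : Λ × G × I := (μ, 1, i0) with ha'
  set p1 : Fin 2 → Λ × G × I := ![a, a'] with hp1d
  set p2 : Fin 2 → Λ × G × I := ![a', a] with hp2d
  set p3 : Fin 2 → Λ × G × I := ![a', a'] with hp3d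
  have hp1 : ∀ e ∈ Sys, SgTerm.eval (reesMul P) e.1 p1 = SgTerm.eval (reesMul P) e.2 p1 :=
    (Set.ext_iff.mp hSys p1).mp (Or.inl (by simp [hp1d]))
  have hp2 : ∀ e ∈ Sys, SgTerm.eval (reesMul P) e.1 p2 = SgTerm.eval (reesMul P) e.2 p2 :=
    (Set.ext_iff.mp hSys p2).mp (Or.inr (by simp [hp2d]))
  have rel13 : ∀ k, (p3 k).2 = (p1 k).2 ∧ ∀ i, P i (p3 k).1 = P i (p1 k).1 := by
    intro k
    fin_cases k
    · exact ⟨rfl, fun i => (hcol i).symm⟩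
    · exact ⟨rfl, fun _ => rfl⟩
  have val : ∀ u : Fin 2 ⊕ (Λ × G × I),
      ((evalL p1 u).1 = l ∧ (evalL p2 u).1 = μ ∧ (evalL p3 u).1 = μ) ∨
      ((evalL p1 u).1 = μ ∧ (evalL p2 u).1 = l ∧ (evalL p3 u).1 = μ) ∨
      ((evalL p1 u).1 = (evalL p2 u).1 ∧ (evalL p2 u).1 = (evalL p3 u).1) := by
    rintro (k | c)
    · fin_cases k
      · exact Or.inl ⟨rfl, rfl, rfl⟩
      · exact Or.inr (Or.inl ⟨rfl, rfl, rfl⟩)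
    · exact Or.inr (Or.inr ⟨rfl, rfl⟩)
  have hp3 : ∀ e ∈ Sys, SgTerm.eval (reesMul P) e.1 p3 = SgTerm.eval (reesMul P) e.2 p3 := by
    intro e he
    have h1 := hp1 e he
    have h2 := hp2 e he
    have hsnd : (SgTerm.eval (reesMul P) e.1 p3).2 = (SgTerm.eval (reesMul P) e.2 p3).2 :=
      calc (SgTerm.eval (reesMul P) e.1 p3).2
          = (SgTerm.eval (reesMul P) e.1 p1).2 := eval_col P rel13 e.1
        _ = (SgTerm.eval (reesMul P) e.2 p1).2 := by rw [h1]
        _ = (SgTerm.eval (reesMul P) e.2 p3).2 := (eval_col P rel13 e.2).symm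
    have g1 : (evalL p1 e.1.1).1 = (evalL p1 e.2.1).1 := by
      rw [← eval_fst, ← eval_fst, h1]
    have g2 : (evalL p2 e.1.1).1 = (evalL p2 e.2.1).1 := by
      rw [← eval_fst, ← eval_fst, h2]
    have hfst : (SgTerm.eval (reesMul P) e.1 p3).1 = (SgTerm.eval (reesMul P) e.2 p3).1 := by
      rw [eval_fst, eval_fst]
      rcases val e.1.1 with ⟨u1, u2, u3⟩ | ⟨u1, u2, u3⟩ | ⟨u1, u2⟩
      · rcases val e.2.1 with ⟨v1, v2, v3⟩ | ⟨v1, v2, v3⟩ | ⟨v1, v2⟩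
        · exact u3.trans v3.symm
        · exact absurd (u1.symm.trans (g1.trans v1)) hne
        · exact absurd (u1.symm.trans (g1.trans (v1.trans (g2.symm.trans u2)))) hne
      · rcases val e.2.1 with ⟨v1, v2, v3⟩ | ⟨v1, v2, v3⟩ | ⟨v1, v2⟩
        · exact absurd (v1.symm.trans (g1.symm.trans u1)) hne
        · exact u3.trans v3.symm
        · exact absurd (u2.symm.trans (g2.trans (v1.symm.trans (g1.symm.trans u1)))) hne
      · rcases val e.2.1 with ⟨v1, v2, v3⟩ | ⟨v1, v2, v3⟩ | ⟨v1, v2⟩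
        · exact absurd (v1.symm.trans (g1.symm.trans (u1.trans (g2.trans v2)))) hne
        · exact absurd (v2.symm.trans (g2.symm.trans (u1.symm.trans (g1.trans v1)))) hne
        · exact (((u2.symm.trans u1.symm).trans g1).trans v1).trans v2
    exact Prod.ext hfst hsnd
  have hmem := (Set.ext_iff.mp hSys p3).mpr hp3
  have hne' : a' ≠ a := fun h => hne (congrArg Prod.fst h).symm
  rcases hmem with h | h
  · exact hne' (by simpa [hp3d] using h)
  · exact hne' (by simpa [hp3d] using h)

lemma not_alg_row (i j : I) (l0 : Λ) (hne : i ≠ j) (hrow : ∀ m, P i m = P j m) :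
    ¬ IsAlgebraic (reesMul P)
      {p : Fin 2 → Λ × G × I | p 0 = (l0, 1, i) ∨ p 1 = (l0, 1, i)} := by
  rintro ⟨Sys, hSys⟩
  set a : Λ × G × I := (l0, 1, i) with ha
  set a' : Λ × G × I := (l0, 1, j) with ha'
  set p1 : Fin 2 → Λ × G × I := ![a, a'] with hp1d
  set p2 : Fin 2 → Λ × G × I := ![a', a] with hp2d
  set p3 : Fin 2 → Λ × G × I := ![a', a'] with hp3d
  have hp1 : ∀ e ∈ Sys, SgTerm.eval (reesMul P) e.1 p1 = SgTerm.eval (reesMul P) e.2 p1 :=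
    (Set.ext_iff.mp hSys p1).mp (Or.inl (by simp [hp1d]))
  have hp2 : ∀ e ∈ Sys, SgTerm.eval (reesMul P) e.1 p2 = SgTerm.eval (reesMul P) e.2 p2 :=
    (Set.ext_iff.mp hSys p2).mp (Or.inr (by simp [hp2d]))
  have rel13 : ∀ k, (p3 k).1 = (p1 k).1 ∧ (p3 k).2.1 = (p1 k).2.1 ∧
      ∀ m, P (p3 k).2.2 m = P (p1 k).2.2 m := by
    intro k
    fin_cases k
    · exact ⟨rfl, rfl, fun m => (hrow m).symm⟩
    · exact ⟨rfl, rfl, fun _ => rfl⟩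
  have val : ∀ u : Fin 2 ⊕ (Λ × G × I),
      ((evalL p1 u).2.2 = i ∧ (evalL p2 u).2.2 = j ∧ (evalL p3 u).2.2 = j) ∨
      ((evalL p1 u).2.2 = j ∧ (evalL p2 u).2.2 = i ∧ (evalL p3 u).2.2 = j) ∨
      ((evalL p1 u).2.2 = (evalL p2 u).2.2 ∧ (evalL p2 u).2.2 = (evalL p3 u).2.2) := by
    rintro (k | c)
    · fin_cases k
      · exact Or.inl ⟨rfl, rfl, rfl⟩
      · exact Or.inr (Or.inl ⟨rfl, rfl, rfl⟩)
    · exact Or.inr (Or.inr ⟨rfl, rfl⟩)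
  have hp3 : ∀ e ∈ Sys, SgTerm.eval (reesMul P) e.1 p3 = SgTerm.eval (reesMul P) e.2 p3 := by
    intro e he
    have h1 := hp1 e he
    have h2 := hp2 e he
    obtain ⟨r11, r12⟩ := eval_row P rel13 e.1
    obtain ⟨r21, r22⟩ := eval_row P rel13 e.2
    have hfst : (SgTerm.eval (reesMul P) e.1 p3).1 = (SgTerm.eval (reesMul P) e.2 p3).1 := by
      rw [r11, h1, ← r21]
    have hsnd1 : (SgTerm.eval (reesMul P) e.1 p3).2.1
        = (SgTerm.eval (reesMul P) e.2 p3).2.1 := by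
      rw [r12, h1, ← r22]
    have g1 : (evalL p1 (e.1.2.getLastD e.1.1)).2.2
        = (evalL p1 (e.2.2.getLastD e.2.1)).2.2 := by
      rw [← eval_last, ← eval_last, h1]
    have g2 : (evalL p2 (e.1.2.getLastD e.1.1)).2.2
        = (evalL p2 (e.2.2.getLastD e.2.1)).2.2 := by
      rw [← eval_last, ← eval_last, h2]
    have hsnd2 : (SgTerm.eval (reesMul P) e.1 p3).2.2
        = (SgTerm.eval (reesMul P) e.2 p3).2.2 := by
      rw [eval_last, eval_last]
      rcases val (e.1.2.getLastD e.1.1) with ⟨u1, u2, u3⟩ | ⟨u1, u2, u3⟩ | ⟨u1, u2⟩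
      · rcases val (e.2.2.getLastD e.2.1) with ⟨v1, v2, v3⟩ | ⟨v1, v2, v3⟩ | ⟨v1, v2⟩
        · exact u3.trans v3.symm
        · exact absurd (u1.symm.trans (g1.trans v1)) hne
        · exact absurd (u1.symm.trans (g1.trans (v1.trans (g2.symm.trans u2)))) hne
      · rcases val (e.2.2.getLastD e.2.1) with ⟨v1, v2, v3⟩ | ⟨v1, v2, v3⟩ | ⟨v1, v2⟩
        · exact absurd (v1.symm.trans (g1.symm.trans u1)) hne
        · exact u3.trans v3.symm
        · exact absurd (u2.symm.trans (g2.trans (v1.symm.trans (g1.symm.trans u1)))) hne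
      · rcases val (e.2.2.getLastD e.2.1) with ⟨v1, v2, v3⟩ | ⟨v1, v2, v3⟩ | ⟨v1, v2⟩
        · exact absurd (v1.symm.trans (g1.symm.trans (u1.trans (g2.trans v2)))) hne
        · exact absurd (v2.symm.trans (g2.symm.trans (u1.symm.trans (g1.trans v1)))) hne
        · exact (((u2.symm.trans u1.symm).trans g1).trans v1).trans v2
    exact Prod.ext hfst (Prod.ext hsnd1 hsnd2)
  have hmem := (Set.ext_iff.mp hSys p3).mpr hp3
  have hne' : a' ≠ a := fun h => hne (congrArg (fun x => x.2.2) h).symm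
  rcases hmem with h | h
  · exact hne' (by simpa [hp3d] using h)
  · exact hne' (by simpa [hp3d] using h)

end Aux

/-- If the normalized matrix `P` of a finite Rees matrix semigroup is singular
(two equal rows or two equal columns), then `S` is not an equational domain;
moreover a set `{(x,y) : x = (λ,1,1) or y = (λ,1,1)}` (resp. with a suitable
second index in the equal-rows case) is not algebraic. -/
theorem singular_not_eqDomain (G I Λ : Type*) [Group G] [Fintype G] [Fintype I]
    [Fintype Λ] (P : I → Λ → G) (i0 : I) (l0 : Λ) (hP : Normalized P i0 l0)
    (hsing : (∃ l μ : Λ, l ≠ μ ∧ ∀ i, P i l = P i μ) ∨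
             (∃ i j : I, i ≠ j ∧ ∀ l, P i l = P j l)) :
    ¬ IsEqDomain (Λ × G × I) (reesMul P) ∧
    ((∃ l μ : Λ, l ≠ μ ∧ ∀ i, P i l = P i μ) →
      ∃ l : Λ, ¬ IsAlgebraic (reesMul P)
        {p : Fin 2 → Λ × G × I | p 0 = (l, 1, i0) ∨ p 1 = (l, 1, i0)}) ∧
    ((∃ i j : I, i ≠ j ∧ ∀ l, P i l = P j l) →
      ∃ i : I, ¬ IsAlgebraic (reesMul P)
        {p : Fin 2 → Λ × G × I | p 0 = (l0, 1, i) ∨ p 1 = (l0, 1, i)}) := by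
  have key : IsEqDomain (Λ × G × I) (reesMul P) →
      ∀ a : Λ × G × I,
        IsAlgebraic (reesMul P) {p : Fin 2 → Λ × G × I | p 0 = a ∨ p 1 = a} := by
    intro hED a
    set Y : Fin 2 → Set (Fin 2 → Λ × G × I) :=
      ![{p | p 0 = a}, {p | p 1 = a}] with hY
    have halg : ∀ k, IsAlgebraic (reesMul P) (Y k) := by
      intro k
      fin_cases k
      · exact ⟨{((Sum.inl 0, []), (Sum.inr a, []))}, by
          ext p
          simp [hY, SgTerm.eval, evalL]⟩
      · exact ⟨{((Sum.inl 1, []), (Sum.inr a, []))}, by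
          ext p
          simp [hY, SgTerm.eval, evalL]⟩
    have hu : (⋃ k, Y k) = {p : Fin 2 → Λ × G × I | p 0 = a ∨ p 1 = a} := by
      ext p
      simp [hY, Set.mem_iUnion, Fin.exists_fin_two]
    have := hED 2 2 Y halg
    rwa [hu] at this
  refine ⟨?_, ?_, ?_⟩
  · intro hED
    rcases hsing with ⟨l, μ, hne, hcol⟩ | ⟨i, j, hne, hrow⟩
    · exact not_alg_col P l μ i0 hne hcol (key hED (l, 1, i0))
    · exact not_alg_row P i j l0 hne hrow (key hED (l0, 1, i))
  · rintro ⟨l, μ, hne, hcol⟩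
    exact ⟨l, not_alg_col P l μ i0 hne hcol⟩
  · rintro ⟨i, j, hne, hrow⟩
    exact ⟨i, not_alg_row P i j l0 hne hrow⟩

end Stmt
end

section
/- Let S = M(G; I, Λ; P) be a finite Rees matrix semigroup with normalized matrix P. If S is an equational domain (in the semigroup language with constants), then the group G is an equational domain in the group language with constants; equivalently, the set {(x,y) ∈ G^2 : x = 1 or y = 1} is algebraic over G. -/
namespace Stmt

/-- A group term with constants: a word in integer powers of variables and
constants from `G`, i.e. an element of `F(X) ∗ G`. -/
abbrev GTerm (G : Type*) (n : ℕ) : Type _ := List ((Fin n × ℤ) ⊕ G)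

/-- Value of a group term at a point. -/
def GTerm.eval {G : Type*} [Group G] {n : ℕ} (t : GTerm G n) (p : Fin n → G) : G :=
  (t.map (fun l => match l with
    | Sum.inl (i, k) => p i ^ k
    | Sum.inr g => g)).prod

/-- `Y ⊆ Gⁿ` is algebraic over the group `G` (group equations with constants). -/
def IsGAlgebraic {G : Type*} [Group G] {n : ℕ} (Y : Set (Fin n → G)) : Prop :=
  ∃ Sys : Set (GTerm G n × GTerm G n),
    Y = {p | ∀ e ∈ Sys, GTerm.eval e.1 p = GTerm.eval e.2 p}

/-- `G` is an equational domain as a group. -/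
def IsGEqDomain (G : Type*) [Group G] : Prop :=
  ∀ (n m : ℕ) (Y : Fin m → Set (Fin n → G)),
    (∀ i, IsGAlgebraic (Y i)) → IsGAlgebraic (⋃ i, Y i)

/-!
The elements `(l0, g, i0)` form a copy of `G` in `S = M(G; I, Λ; P)`, and on this copy a
semigroup term with constants evaluates to `(l, w(g), i)`, where `l` and `i` are fixed and `w` is
a group term whose constants include entries of `P`. Hence the axes `{x = 1 ∨ y = 1}` of `G²` are
the trace on `G²` of the axes through `(l0, 1, i0)` in `S²`, which are algebraic because `S` is an
equational domain. Plugging the differences of two systems into the equations of the axes shows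
that a union of two algebraic sets over `G` is algebraic; for the empty union one needs `G ≠ 1`,
which holds because over the trivial group `S` is a rectangular band, where an equation holding on
the axes through `e` also holds at `(s, s)`.
-/

def axes {S : Type*} (e : S) : Set (Fin 2 → S) := {q | q 0 = e ∨ q 1 = e}

theorem setOf_comp_mem_axes_of_injective {S T : Type*} {f : S → T} (hf : Function.Injective f)
    (e : S) : {q : Fin 2 → S | f ∘ q ∈ axes (f e)} = axes e := by
  ext q
  simp only [axes, Set.mem_ofPred_eq, Function.comp_apply, hf.eq_iff]

namespace GTerm

variable {G : Type*} [Group G] {n m : ℕ}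

def evalLetter (p : Fin n → G) : (Fin n × ℤ) ⊕ G → G
  | Sum.inl (i, k) => p i ^ k
  | Sum.inr g => g

theorem eval_eq_prod_map (t : GTerm G n) (p : Fin n → G) :
    t.eval p = (t.map (evalLetter p)).prod := rfl

@[simp]
theorem eval_nil (p : Fin n → G) : GTerm.eval ([] : GTerm G n) p = 1 := rfl

@[simp]
theorem eval_cons (x : (Fin n × ℤ) ⊕ G) (t : GTerm G n) (p : Fin n → G) :
    GTerm.eval (x :: t) p = evalLetter p x * t.eval p := by
  simp [eval_eq_prod_map]

@[simp]
theorem eval_append (t s : GTerm G n) (p : Fin n → G) :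
    GTerm.eval (t ++ s) p = t.eval p * s.eval p := by
  simp [eval_eq_prod_map]

theorem eval_flatten (ts : List (GTerm G n)) (p : Fin n → G) :
    GTerm.eval ts.flatten p = (ts.map (GTerm.eval · p)).prod := by
  induction ts with
  | nil => rfl
  | cons t ts ih => simp [ih]

def invLetter : (Fin n × ℤ) ⊕ G → (Fin n × ℤ) ⊕ G
  | Sum.inl (i, k) => Sum.inl (i, -k)
  | Sum.inr g => Sum.inr g⁻¹

protected def inv (t : GTerm G n) : GTerm G n := (t.map invLetter).reverse

@[simp]
theorem eval_inv (t : GTerm G n) (p : Fin n → G) : GTerm.eval t.inv p = (t.eval p)⁻¹ := by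
  induction t with
  | nil => simp [GTerm.inv]
  | cons x t ih =>
    have hx : evalLetter p (invLetter x) = (evalLetter p x)⁻¹ := by
      rcases x with ⟨i, k⟩ | g <;> simp [invLetter, evalLetter]
    simp_all [GTerm.inv]

protected def zpow (t : GTerm G n) : ℤ → GTerm G n
  | Int.ofNat k => (List.replicate k t).flatten
  | Int.negSucc k => (List.replicate (k + 1) t.inv).flatten

@[simp]
theorem eval_zpow (t : GTerm G n) (k : ℤ) (p : Fin n → G) :
    GTerm.eval (t.zpow k) p = t.eval p ^ k := by
  cases k <;> simp [GTerm.zpow, eval_flatten, zpow_negSucc]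

def subst (t : GTerm G m) (σ : Fin m → GTerm G n) : GTerm G n :=
  (t.map fun
    | Sum.inl (i, k) => (σ i).zpow k
    | Sum.inr g => [Sum.inr g]).flatten

@[simp]
theorem eval_subst (t : GTerm G m) (σ : Fin m → GTerm G n) (p : Fin n → G) :
    GTerm.eval (t.subst σ) p = t.eval fun i => (σ i).eval p := by
  rw [subst, eval_flatten, List.map_map, eval_eq_prod_map]
  congr 1
  refine List.map_congr_left fun x _ => ?_
  rcases x with ⟨i, k⟩ | g <;> simp [evalLetter]

end GTerm

section GroupEquations

variable {G : Type*} [Group G] {n : ℕ}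

theorem isGAlgebraic_iff_eq_one {Y : Set (Fin n → G)} :
    IsGAlgebraic Y ↔ ∃ W : Set (GTerm G n), Y = {p | ∀ w ∈ W, w.eval p = 1} := by
  constructor
  · rintro ⟨Sys, rfl⟩
    refine ⟨(fun e => e.1 ++ e.2.inv) '' Sys, ?_⟩
    ext p
    simp only [Set.mem_ofPred_eq, Set.forall_mem_image, GTerm.eval_append, GTerm.eval_inv,
      mul_inv_eq_one]
  · rintro ⟨W, rfl⟩
    exact ⟨(fun w => (w, [])) '' W, by ext p; simp⟩

/-- `{a = 1 ∀ a ∈ WA} ∪ {b = 1 ∀ b ∈ WB}` is cut out by the equations `d(a, b) = 1`, where `d`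
runs over equations defining the axes. -/
theorem IsGAlgebraic.union (hD : IsGAlgebraic (axes (1 : G))) {A B : Set (Fin n → G)}
    (hA : IsGAlgebraic A) (hB : IsGAlgebraic B) : IsGAlgebraic (A ∪ B) := by
  rw [isGAlgebraic_iff_eq_one] at hD hA hB ⊢
  obtain ⟨WD, hWD⟩ := hD
  obtain ⟨WA, rfl⟩ := hA
  obtain ⟨WB, rfl⟩ := hB
  refine ⟨{w | ∃ a ∈ WA, ∃ b ∈ WB, ∃ d ∈ WD, w = d.subst ![a, b]}, ?_⟩
  ext p
  have key : ∀ a b : GTerm G n,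
      (a.eval p = 1 ∨ b.eval p = 1) ↔ ∀ d ∈ WD, (d.subst ![a, b]).eval p = 1 := by
    intro a b
    have := Set.ext_iff.1 hWD ![a.eval p, b.eval p]
    simp only [axes, Set.mem_ofPred_eq, Matrix.cons_val_zero, Matrix.cons_val_one] at this
    have hpt : (fun i => (![a, b] i).eval p) = ![a.eval p, b.eval p] := by
      ext i; fin_cases i <;> rfl
    simp only [GTerm.eval_subst, this, hpt]
  simp only [Set.mem_union, Set.mem_ofPred_eq, forall_exists_index, and_imp]
  constructor
  · rintro hp w a ha b hb d hd rfl
    exact (key a b).1 (hp.imp (· a ha) (· b hb)) d hd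
  · intro hp
    rw [or_iff_not_imp_left]
    push Not
    rintro ⟨a, ha, ha1⟩ b hb
    exact ((key a b).2 fun d hd => hp _ a ha b hb d hd rfl).resolve_left ha1

theorem isGAlgebraic_empty [Nontrivial G] : IsGAlgebraic (∅ : Set (Fin n → G)) := by
  obtain ⟨g, hg⟩ := exists_ne (1 : G)
  exact ⟨{([Sum.inr g], [])}, by ext p; simpa [GTerm.evalLetter] using hg⟩

theorem isGEqDomain_of_isGAlgebraic_axes [Nontrivial G] (hD : IsGAlgebraic (axes (1 : G))) :
    IsGEqDomain G := by
  intro n m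
  induction m with
  | zero => intro Y _; simpa using isGAlgebraic_empty
  | succ m ih =>
    intro Y hY
    rw [Set.iUnion_fin_add_one_eq_iUnion_succ]
    exact hD.union (hY 0) (ih _ fun i => hY i.succ)

end GroupEquations

section SemigroupEquations

variable {S : Type*} {mul : S → S → S} {n : ℕ}

theorem IsEqDomain.nontrivial (h : IsEqDomain S mul) : Nontrivial S := by
  by_contra hS
  rw [not_nontrivial_iff_subsingleton] at hS
  obtain ⟨Sys, hSys⟩ := h 0 0 Fin.elim0 fun i => i.elim0
  have hmem : (Fin.elim0 : Fin 0 → S) ∈ ⋃ i : Fin 0, (Fin.elim0 i : Set (Fin 0 → S)) := by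
    rw [hSys]
    exact fun _ _ => Subsingleton.elim _ _
  simp at hmem

theorem isAlgebraic_setOf_eq (i : Fin n) (c : S) : IsAlgebraic mul {p : Fin n → S | p i = c} :=
  ⟨{((Sum.inl i, []), (Sum.inr c, []))}, by ext p; simp [SgTerm.eval, evalL]⟩

theorem IsEqDomain.isAlgebraic_axes (h : IsEqDomain S mul) (e : S) : IsAlgebraic mul (axes e) := by
  convert h 2 2 (fun i => {p | p i = e}) fun i => isAlgebraic_setOf_eq i e using 1
  ext q
  simp [axes, Fin.exists_fin_two]

theorem evalL_diag {β : Type*} (φ : S → β) {c s : S} {a b : Fin 2 ⊕ S}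
    (h₁ : φ (evalL ![c, s] a) = φ (evalL ![c, s] b))
    (h₂ : φ (evalL ![s, c] a) = φ (evalL ![s, c] b)) :
    φ (evalL ![s, s] a) = φ (evalL ![s, s] b) := by
  rcases a with j | x <;> rcases b with k | y <;> (try fin_cases j) <;> (try fin_cases k)
  all_goals simp_all [evalL]

end SemigroupEquations

section Rees

variable {G I Λ : Type*} [Group G] (P : I → Λ → G) {n : ℕ}

theorem fst_foldl_reesMul (f : Fin n ⊕ (Λ × G × I) → Λ × G × I)
    (ls : List (Fin n ⊕ (Λ × G × I))) (a : Λ × G × I) :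
    (ls.foldl (fun b x => reesMul P b (f x)) a).1 = a.1 := by
  induction ls generalizing a with
  | nil => rfl
  | cons x ls ih => exact ih _

theorem snd_snd_foldl_reesMul (f : Fin n ⊕ (Λ × G × I) → Λ × G × I)
    (ls : List (Fin n ⊕ (Λ × G × I))) {a : Λ × G × I} {x : Fin n ⊕ (Λ × G × I)}
    (ha : a.2.2 = (f x).2.2) :
    (ls.foldl (fun b y => reesMul P b (f y)) a).2.2 = (f (ls.getLastD x)).2.2 := by
  induction ls generalizing a x with
  | nil => exact ha
  | cons y ls ih => rw [List.foldl_cons, List.getLastD_cons]; exact ih rfl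

theorem SgTerm.fst_eval_reesMul (t : SgTerm (Λ × G × I) n) (q : Fin n → Λ × G × I) :
    (SgTerm.eval (reesMul P) t q).1 = (evalL q t.1).1 :=
  fst_foldl_reesMul P _ _ _

theorem SgTerm.snd_snd_eval_reesMul (t : SgTerm (Λ × G × I) n) (q : Fin n → Λ × G × I) :
    (SgTerm.eval (reesMul P) t q).2.2 = (evalL q (t.2.getLastD t.1)).2.2 :=
  snd_snd_foldl_reesMul P _ _ rfl

/-- Over the trivial group `M(G; I, Λ; P)` is a rectangular band. -/
theorem SgTerm.eval_reesMul_eq_iff [Subsingleton G] (t t' : SgTerm (Λ × G × I) n)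
    (q : Fin n → Λ × G × I) :
    SgTerm.eval (reesMul P) t q = SgTerm.eval (reesMul P) t' q ↔
      (evalL q t.1).1 = (evalL q t'.1).1 ∧
        (evalL q (t.2.getLastD t.1)).2.2 = (evalL q (t'.2.getLastD t'.1)).2.2 := by
  rw [← fst_eval_reesMul, ← fst_eval_reesMul, ← snd_snd_eval_reesMul, ← snd_snd_eval_reesMul]
  constructor
  · rintro h; rw [h]; exact ⟨rfl, rfl⟩
  · rintro ⟨h₁, h₂⟩
    exact Prod.ext h₁ (Prod.ext (Subsingleton.elim _ _) h₂)

/-- If `G` were trivial, every equation holding on the axes through `e` would hold at `(s, s)`. -/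
theorem nontrivial_of_isEqDomain_reesMul (h : IsEqDomain (Λ × G × I) (reesMul P)) :
    Nontrivial G := by
  by_contra hG
  rw [not_nontrivial_iff_subsingleton] at hG
  have := h.nontrivial
  obtain ⟨e, s, hes⟩ := exists_pair_ne (Λ × G × I)
  obtain ⟨Sys, hSys⟩ := h.isAlgebraic_axes e
  have hss : ![s, s] ∈ axes e := by
    have hes : ![e, s] ∈ axes e := Or.inl rfl
    have hse : ![s, e] ∈ axes e := Or.inr rfl
    rw [hSys] at hes hse ⊢
    intro E hE
    have h₁ := (SgTerm.eval_reesMul_eq_iff P _ _ _).1 (hes E hE)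
    have h₂ := (SgTerm.eval_reesMul_eq_iff P _ _ _).1 (hse E hE)
    exact (SgTerm.eval_reesMul_eq_iff P _ _ _).2
      ⟨evalL_diag Prod.fst h₁.1 h₂.1, evalL_diag (fun x : Λ × G × I => x.2.2) h₁.2 h₂.2⟩
  rcases hss with hs | hs <;> exact hes hs.symm

end Rees

section ReesEmbedding

variable {G I Λ : Type*} (i0 : I) (l0 : Λ)

def reesEmbed (g : G) : Λ × G × I := (l0, g, i0)

theorem reesEmbed_injective : Function.Injective (reesEmbed (G := G) i0 l0) :=
  fun _ _ h => congrArg (·.2.1) h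

variable [Group G] (P : I → Λ → G) {n : ℕ}

theorem exists_evalL_reesEmbed (x : Fin n ⊕ (Λ × G × I)) :
    ∃ (l : Λ) (w : GTerm G n) (i : I), ∀ p, evalL (reesEmbed i0 l0 ∘ p) x = (l, w.eval p, i) := by
  rcases x with j | s
  · exact ⟨l0, [Sum.inl (j, 1)], i0, fun p => by simp [evalL, reesEmbed, GTerm.evalLetter]⟩
  · exact ⟨s.1, [Sum.inr s.2.1], s.2.2, fun p => by simp [evalL, GTerm.evalLetter]⟩

theorem exists_foldl_reesMul_reesEmbed (ls : List (Fin n ⊕ (Λ × G × I))) (l : Λ) (w : GTerm G n)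
    (i : I) : ∃ (w' : GTerm G n) (i' : I), ∀ p,
      ls.foldl (fun b x => reesMul P b (evalL (reesEmbed i0 l0 ∘ p) x)) (l, w.eval p, i) =
        (l, w'.eval p, i') := by
  induction ls generalizing w i with
  | nil => exact ⟨w, i, fun _ => rfl⟩
  | cons x ls ih =>
    obtain ⟨lx, wx, ix, hx⟩ := exists_evalL_reesEmbed i0 l0 x
    obtain ⟨w', i', hw'⟩ := ih (w ++ Sum.inr (P i lx) :: wx) ix
    refine ⟨w', i', fun p => ?_⟩
    rw [List.foldl_cons, hx, ← hw']
    simp [reesMul, GTerm.evalLetter, mul_assoc]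

theorem exists_eval_reesEmbed (t : SgTerm (Λ × G × I) n) :
    ∃ (l : Λ) (w : GTerm G n) (i : I),
      ∀ p, SgTerm.eval (reesMul P) t (reesEmbed i0 l0 ∘ p) = (l, w.eval p, i) := by
  obtain ⟨l, w, i, hw⟩ := exists_evalL_reesEmbed i0 l0 t.1
  obtain ⟨w', i', hw'⟩ := exists_foldl_reesMul_reesEmbed i0 l0 P t.2 l w i
  exact ⟨l, w', i', fun p => by rw [SgTerm.eval, hw, hw']⟩

/-- On the copy of `G` the outer coordinates of a term are constant, and the witness `p₀` shows
that they agree on both sides of each equation. -/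
theorem IsAlgebraic.isGAlgebraic_preimage_reesEmbed {Y : Set (Fin n → Λ × G × I)}
    (hY : IsAlgebraic (reesMul P) Y) {p₀ : Fin n → G} (hp₀ : reesEmbed i0 l0 ∘ p₀ ∈ Y) :
    IsGAlgebraic {p | reesEmbed i0 l0 ∘ p ∈ Y} := by
  obtain ⟨Sys, rfl⟩ := hY
  choose l w i hval using exists_eval_reesEmbed i0 l0 P (n := n)
  refine ⟨(fun E => (w E.1, w E.2)) '' Sys, ?_⟩
  ext p
  simp only [Set.mem_ofPred_eq, Set.forall_mem_image, hval] at hp₀ ⊢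
  refine forall₂_congr fun E hE => ?_
  have := hp₀ E hE
  simp only [Prod.mk.injEq] at this ⊢
  tauto

end ReesEmbedding

theorem group_eqDomain_of_rees_eqDomain_general (G I Λ : Type*) [Group G] (P : I → Λ → G) (i0 : I)
    (l0 : Λ) (h : IsEqDomain (Λ × G × I) (reesMul P)) :
    IsGEqDomain G ∧ IsGAlgebraic {p : Fin 2 → G | p 0 = 1 ∨ p 1 = 1} := by
  have := nontrivial_of_isEqDomain_reesMul P h
  have hD : IsGAlgebraic (axes (1 : G)) := by
    rw [← setOf_comp_mem_axes_of_injective (reesEmbed_injective i0 l0)]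
    exact (h.isAlgebraic_axes _).isGAlgebraic_preimage_reesEmbed i0 l0 P (p₀ := 1) (Or.inl rfl)
  exact ⟨isGEqDomain_of_isGAlgebraic_axes hD, hD⟩

/-- If a finite Rees matrix semigroup `M(G; I, Λ; P)` with normalized `P` is an
equational domain, then `G` is an equational domain in the group language with
constants; equivalently `{(x,y) : x = 1 or y = 1} ⊆ G²` is algebraic over `G`. -/
theorem group_eqDomain_of_rees_eqDomain (G I Λ : Type*) [Group G] [Fintype G]
    [Fintype I] [Fintype Λ] (P : I → Λ → G) (i0 : I) (l0 : Λ)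
    (hP : Normalized P i0 l0) (h : IsEqDomain (Λ × G × I) (reesMul P)) :
    IsGEqDomain G ∧ IsGAlgebraic {p : Fin 2 → G | p 0 = 1 ∨ p 1 = 1} :=
  group_eqDomain_of_rees_eqDomain_general G I Λ P i0 l0 h

end Stmt
end

section
/- Let S be a semigroup, I a left ideal of S (s·a ∈ I for all s ∈ S, a ∈ I), and e ∈ S an element commuting with every element of I such that ea ≠ a for some a ∈ I. Then S is not an equational domain: the set M = {(x_1,x_2) ∈ S^2 : x_1 = a or x_2 = a} is not algebraic over S. (Key computation: for any equation t = s with constants, the values at (ea,a), (a,ea), (a,a) being equal forces equality at (ea,ea) as well.) -/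
/-!
Since `e` commutes with the left ideal `I ∋ a`, we have `u * (e * a) = e * (u * a)` for every `u`.
So replacing some occurrences of `a` by `e * a` in a term multiplies its value on the left by `e`
once per replaced occurrence (powers of `e` are taken as iterates of `(e * ·)`, as `S` may lack a
unit). An equation true at `(a, a)`, `(e a, a)` and `(a, e a)` is therefore true at `(e a, e a)`,
a point outside `{x₁ = a} ∪ {x₂ = a}`, although both of these sets are algebraic.
-/

namespace Stmt

theorem Function.iterate_add_apply_eq_of_eq {α : Type*} (f : α → α) {x : α} {k₁ k₂ l₁ l₂ : ℕ}
    (h₁ : f^[k₁] x = f^[l₁] x) (h₂ : f^[k₂] x = f^[l₂] x) :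
    f^[k₁ + k₂] x = f^[l₁ + l₂] x :=
  calc f^[k₁ + k₂] x = f^[k₁] (f^[l₂] x) := by rw [Function.iterate_add_apply, h₂]
    _ = f^[l₂] (f^[l₁] x) := by rw [← Function.iterate_add_apply, Nat.add_comm,
          Function.iterate_add_apply, h₁]
    _ = f^[l₁ + l₂] x := by rw [← Function.iterate_add_apply, Nat.add_comm]

section Semigroup

variable {S : Type*} [Semigroup S]

theorem iterate_mul_left_mul (e y z : S) (k : ℕ) :
    (e * ·)^[k] y * z = (e * ·)^[k] (y * z) :=
  ((Function.Commute.iterate_left (fun x => (mul_assoc e x z).symm) k) y).symm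

theorem mul_iterate_mul_left_of_mem {I : Set S} (hI : ∀ s : S, ∀ a ∈ I, s * a ∈ I) {e : S}
    (hcomm : ∀ a ∈ I, e * a = a * e) (u : S) (k : ℕ) {x : S} (hx : x ∈ I) :
    u * (e * ·)^[k] x = (e * ·)^[k] (u * x) := by
  induction k generalizing x with
  | zero => rfl
  | succ k ih =>
    have hpull : u * (e * x) = e * (u * x) := by
      rw [hcomm x hx, ← mul_assoc, hcomm (u * x) (hI u x hx)]
    simp only [Function.iterate_succ_apply]
    rw [ih (hI e x hx), hpull]

end Semigroup

def SgTerm.weight {S : Type*} {n : ℕ} (m : Fin n → ℕ) (t : SgTerm S n) : ℕ :=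
  ((t.1 :: t.2).map (Sum.elim m fun _ => 0)).sum

theorem SgTerm.weight_add {S : Type*} {n : ℕ} (m m' : Fin n → ℕ) (t : SgTerm S n) :
    t.weight (m + m') = t.weight m + t.weight m' := by
  have hletter : Sum.elim (m + m') (fun _ : S => 0)
      = fun l => Sum.elim m (fun _ => 0) l + Sum.elim m' (fun _ => 0) l := by
    funext l; cases l <;> rfl
  simp only [SgTerm.weight, hletter, List.sum_map_add]

section Evaluation

variable {S : Type*} [Semigroup S] {I : Set S} {e a : S} {n : ℕ}

theorem foldl_mul_evalL_iterate (hI : ∀ s : S, ∀ a ∈ I, s * a ∈ I)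
    (hcomm : ∀ a ∈ I, e * a = a * e) (ha : a ∈ I) (m : Fin n → ℕ) (L : List (Fin n ⊕ S))
    (k : ℕ) (y : S) :
    L.foldl (fun x l => x * evalL (fun i => (e * ·)^[m i] a) l) ((e * ·)^[k] y)
      = (e * ·)^[k + (L.map (Sum.elim m fun _ => 0)).sum]
          (L.foldl (fun x l => x * evalL (fun _ => a) l) y) := by
  induction L generalizing k y with
  | nil => rfl
  | cons l L ih =>
    have hstep : (e * ·)^[k] y * evalL (fun i => (e * ·)^[m i] a) l
        = (e * ·)^[k + Sum.elim m (fun _ => 0) l] (y * evalL (fun _ => a) l) := by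
      rw [iterate_mul_left_mul]
      cases l with
      | inl i =>
        change (e * ·)^[k] (y * (e * ·)^[m i] a) = (e * ·)^[k + m i] (y * a)
        rw [mul_iterate_mul_left_of_mem hI hcomm _ _ ha, Function.iterate_add_apply]
      | inr s => rfl
    rw [List.foldl_cons, hstep, ih, List.map_cons, List.sum_cons, Nat.add_assoc]
    rfl

theorem SgTerm.eval_iterate_mul_left (hI : ∀ s : S, ∀ a ∈ I, s * a ∈ I)
    (hcomm : ∀ a ∈ I, e * a = a * e) (ha : a ∈ I) (m : Fin n → ℕ) (t : SgTerm S n) :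
    t.eval (· * ·) (fun i => (e * ·)^[m i] a)
      = (e * ·)^[t.weight m] (t.eval (· * ·) fun _ => a) := by
  have hhead : evalL (fun i => (e * ·)^[m i] a) t.1
      = (e * ·)^[Sum.elim m (fun _ => 0) t.1] (evalL (fun _ => a) t.1) := by
    cases t.1 <;> rfl
  rw [SgTerm.eval, hhead, foldl_mul_evalL_iterate hI hcomm ha]
  rfl

theorem SgTerm.eval_eq_at_add (hI : ∀ s : S, ∀ a ∈ I, s * a ∈ I)
    (hcomm : ∀ a ∈ I, e * a = a * e) (ha : a ∈ I) (t u : SgTerm S n) (m m' : Fin n → ℕ)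
    (h₀ : t.eval (· * ·) (fun _ => a) = u.eval (· * ·) fun _ => a)
    (h : t.eval (· * ·) (fun i => (e * ·)^[m i] a) = u.eval (· * ·) fun i => (e * ·)^[m i] a)
    (h' : t.eval (· * ·) (fun i => (e * ·)^[m' i] a) = u.eval (· * ·) fun i => (e * ·)^[m' i] a) :
    t.eval (· * ·) (fun i => (e * ·)^[(m + m') i] a)
      = u.eval (· * ·) fun i => (e * ·)^[(m + m') i] a := by
  simp only [SgTerm.eval_iterate_mul_left hI hcomm ha, SgTerm.weight_add] at h h' ⊢
  rw [← h₀] at h h' ⊢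
  exact Function.iterate_add_apply_eq_of_eq _ h h'

end Evaluation

theorem isAlgebraic_setOf_apply_eq {S : Type*} (mul : S → S → S) {n : ℕ} (i : Fin n) (c : S) :
    IsAlgebraic mul {p : Fin n → S | p i = c} :=
  ⟨{((Sum.inl i, []), (Sum.inr c, []))}, by ext p; simp [SgTerm.eval, evalL]⟩

theorem IsEqDomain.isAlgebraic_union {S : Type*} {mul : S → S → S} (hS : IsEqDomain S mul)
    {n : ℕ} {Y₁ Y₂ : Set (Fin n → S)} (h₁ : IsAlgebraic mul Y₁) (h₂ : IsAlgebraic mul Y₂) :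
    IsAlgebraic mul (Y₁ ∪ Y₂) := by
  have h := hS n 2 ![Y₁, Y₂] (Fin.forall_fin_two.2 ⟨h₁, h₂⟩)
  rwa [show (⋃ i, ![Y₁, Y₂] i) = Y₁ ∪ Y₂ by ext p; simp [Fin.exists_fin_two]] at h

theorem not_isAlgebraic_setOf_apply_eq_or_apply_eq {S : Type*} [Semigroup S] {I : Set S}
    (hI : ∀ s : S, ∀ a ∈ I, s * a ∈ I) {e : S} (hcomm : ∀ a ∈ I, e * a = a * e) {a : S}
    (ha : a ∈ I) (hea : e * a ≠ a) {n : ℕ} {i j : Fin n} (hij : i ≠ j) :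
    ¬ IsAlgebraic (· * ·) {p : Fin n → S | p i = a ∨ p j = a} := by
  rintro ⟨Sys, hSys⟩
  set pt : (Fin n → ℕ) → Fin n → S := fun m k => (e * ·)^[m k] a
  have hsol : ∀ m, (pt m i = a ∨ pt m j = a) →
      ∀ eq ∈ Sys, eq.1.eval (· * ·) (pt m) = eq.2.eval (· * ·) (pt m) := by
    intro m hm
    have hmem : pt m ∈ {p : Fin n → S | p i = a ∨ p j = a} := hm
    rwa [hSys] at hmem
  have hboth : pt (Pi.single i 1 + Pi.single j 1) ∈ {p : Fin n → S | p i = a ∨ p j = a} := by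
    rw [hSys]
    intro eq heq
    exact SgTerm.eval_eq_at_add hI hcomm ha eq.1 eq.2 _ _ (hsol 0 (Or.inl rfl) eq heq)
      (hsol _ (Or.inr (by simp [pt, hij.symm])) eq heq) (hsol _ (Or.inl (by simp [pt, hij])) eq heq)
  rcases hboth with h | h <;> exact hea (by simpa [pt, hij, hij.symm] using h)

/-- Let `I` be a left ideal of a semigroup `S` and `e ∈ S` an element commuting
with every element of `I` such that `e·a ≠ a` for some `a ∈ I`. Then the set
`{(x₁,x₂) : x₁ = a or x₂ = a}` is not algebraic and `S` is not an equational
domain. -/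
theorem not_eqDomain_of_left_ideal_commuting_element (S : Type*) [Semigroup S]
    (I : Set S) (hI : ∀ s : S, ∀ a ∈ I, s * a ∈ I)
    (e : S) (hcomm : ∀ a ∈ I, e * a = a * e)
    (a : S) (ha : a ∈ I) (hea : e * a ≠ a) :
    ¬ IsAlgebraic (· * ·) {p : Fin 2 → S | p 0 = a ∨ p 1 = a} ∧
    ¬ IsEqDomain S (· * ·) := by
  have hM := not_isAlgebraic_setOf_apply_eq_or_apply_eq hI hcomm ha hea
    (i := (0 : Fin 2)) (j := 1) (by decide)
  refine ⟨hM, fun hS => hM ?_⟩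
  rw [Set.ofPred_or]
  exact hS.isAlgebraic_union (isAlgebraic_setOf_apply_eq _ 0 a) (isAlgebraic_setOf_apply_eq _ 1 a)

end Stmt
end

section
/- Any nontrivial semigroup S possessing a central element e with ae ≠ a for some a ∈ S is not an equational domain. Consequently: (1) any nontrivial semigroup with zero is not an equational domain; (2) any nontrivial commutative semigroup is not an equational domain; (3) any finite homogroup (a semigroup whose minimal ideal Ker(S) is a group) that is an equational domain must satisfy S = Ker(S), i.e., must itself be a group. -/
namespace Stmt

section Aux

variable {S : Type*} [Semigroup S]

/-- `mulE e s k = s * e^k` (no identity needed). -/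
def mulE (e : S) : S → ℕ → S
  | s, 0 => s
  | s, k + 1 => mulE e s k * e

variable {e : S}

lemma mulE_mul_right (he : ∀ s : S, e * s = s * e) (a b : S) :
    ∀ j, mulE e a j * b = mulE e (a * b) j
  | 0 => rfl
  | j + 1 => by
    show mulE e a j * e * b = mulE e (a * b) j * e
    rw [mul_assoc, he b, ← mul_assoc, mulE_mul_right he a b j]

lemma mul_mulE (a b : S) : ∀ c, a * mulE e b c = mulE e (a * b) c
  | 0 => rfl
  | c + 1 => by
    show a * (mulE e b c * e) = mulE e (a * b) c * e
    rw [← mul_assoc, mul_mulE a b c]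

lemma mulE_add (a : S) (j : ℕ) : ∀ c, mulE e (mulE e a j) c = mulE e a (j + c)
  | 0 => rfl
  | c + 1 => by
    show mulE e (mulE e a j) c * e = mulE e a (j + c) * e
    rw [mulE_add a j c]

/-- per-letter count. -/
def lcnt {n : ℕ} (f : Fin n → ℕ) : Fin n ⊕ S → ℕ
  | Sum.inl i => f i
  | Sum.inr _ => 0

lemma evalL_mulE {n : ℕ} (p : Fin n → S) (f : Fin n → ℕ) (l : Fin n ⊕ S) :
    evalL (fun i => mulE e (p i) (f i)) l = mulE e (evalL p l) (lcnt f l) := by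
  cases l <;> rfl

lemma foldl_mulE (he : ∀ s : S, e * s = s * e) {n : ℕ} (p : Fin n → S) (f : Fin n → ℕ) :
    ∀ (ls : List (Fin n ⊕ S)) (a : S) (j : ℕ),
      ls.foldl (fun a l => a * evalL (fun i => mulE e (p i) (f i)) l) (mulE e a j)
        = mulE e (ls.foldl (fun a l => a * evalL p l) a) (j + (ls.map (lcnt f)).sum)
  | [], a, j => by simp
  | l :: ls, a, j => by
    have h1 : mulE e a j * evalL (fun i => mulE e (p i) (f i)) l
        = mulE e (a * evalL p l) (j + lcnt f l) := by
      rw [evalL_mulE, mul_mulE, mulE_mul_right he, mulE_add]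
    show List.foldl _ (mulE e a j * evalL (fun i => mulE e (p i) (f i)) l) ls = _
    rw [h1, foldl_mulE he p f ls (a * evalL p l) (j + lcnt f l)]
    simp [add_assoc]

/-- total variable count of a term, weighted by `f`. -/
def tcnt {n : ℕ} (f : Fin n → ℕ) (t : SgTerm S n) : ℕ :=
  lcnt f t.1 + (t.2.map (lcnt f)).sum

lemma eval_mulE (he : ∀ s : S, e * s = s * e) {n : ℕ} (p : Fin n → S) (f : Fin n → ℕ)
    (t : SgTerm S n) :
    SgTerm.eval (· * ·) t (fun i => mulE e (p i) (f i))
      = mulE e (SgTerm.eval (· * ·) t p) (tcnt f t) := by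
  show t.2.foldl _ (evalL (fun i => mulE e (p i) (f i)) t.1) = _
  rw [evalL_mulE, foldl_mulE he p f t.2 (evalL p t.1) (lcnt f t.1)]
  rfl

lemma lcnt_add {n : ℕ} (f g : Fin n → ℕ) (l : Fin n ⊕ S) :
    lcnt (f + g) l = lcnt f l + lcnt g l := by cases l <;> rfl

lemma tcnt_add {n : ℕ} (f g : Fin n → ℕ) (t : SgTerm S n) :
    tcnt (f + g) t = tcnt f t + tcnt g t := by
  have : ∀ ls : List (Fin n ⊕ S),
      (ls.map (lcnt (f + g))).sum = (ls.map (lcnt f)).sum + (ls.map (lcnt g)).sum := by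
    intro ls; induction ls with
    | nil => simp
    | cons l ls ih => simp [lcnt_add, ih]; omega
  unfold tcnt
  rw [lcnt_add, this]
  omega

end Aux

/-- Main part: central `e` with `a * e ≠ a` kills being an equational domain. -/
lemma part1 (S : Type*) [Semigroup S] (e a : S)
    (he : ∀ s : S, e * s = s * e) (hae : a * e ≠ a) : ¬ IsEqDomain S (· * ·) := by
  intro hED
  set Y : Fin 2 → Set (Fin 2 → S) := fun i => {p | p i = a} with hY
  have halg : ∀ i, IsAlgebraic (· * ·) (Y i) := by
    intro i
    refine ⟨{((Sum.inl i, []), (Sum.inr a, []))}, ?_⟩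
    ext p
    simp only [hY, Set.mem_setOf_eq, Set.mem_singleton_iff]
    constructor
    · rintro h eq rfl; exact h
    · intro h; exact h _ rfl
  obtain ⟨Sys, hSys⟩ := hED 2 2 Y halg
  -- points
  set p0 : Fin 2 → S := fun _ => a with hp0
  set f0 : Fin 2 → ℕ := fun i => if i = 0 then 1 else 0 with hf0
  set f1 : Fin 2 → ℕ := fun i => if i = 1 then 1 else 0 with hf1
  have hmem : ∀ p ∈ (⋃ i, Y i),
      ∀ eq ∈ Sys, SgTerm.eval (· * ·) eq.1 p = SgTerm.eval (· * ·) eq.2 p := by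
    intro p hp; rw [hSys] at hp; exact hp
  have hp0mem : p0 ∈ ⋃ i, Y i := Set.mem_iUnion.2 ⟨0, rfl⟩
  have hpAmem : (fun i => mulE e (p0 i) (f1 i)) ∈ ⋃ i, Y i :=
    Set.mem_iUnion.2 ⟨0, by simp [hY, hp0, hf1, mulE]⟩
  have hpBmem : (fun i => mulE e (p0 i) (f0 i)) ∈ ⋃ i, Y i :=
    Set.mem_iUnion.2 ⟨1, by simp [hY, hp0, hf0, mulE]⟩
  have hpBB : (fun i => mulE e (p0 i) ((f0 + f1) i)) ∈ ⋃ i, Y i := by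
    rw [hSys]
    intro eq heq
    have hc : SgTerm.eval (· * ·) eq.1 p0 = SgTerm.eval (· * ·) eq.2 p0 :=
      hmem p0 hp0mem eq heq
    set c := SgTerm.eval (· * ·) eq.1 p0 with hcdef
    have h1 : mulE e c (tcnt f1 eq.1) = mulE e c (tcnt f1 eq.2) := by
      have := hmem _ hpAmem eq heq
      rwa [eval_mulE he, eval_mulE he, ← hc] at this
    have h0 : mulE e c (tcnt f0 eq.1) = mulE e c (tcnt f0 eq.2) := by
      have := hmem _ hpBmem eq heq
      rwa [eval_mulE he, eval_mulE he, ← hc] at this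
    rw [eval_mulE he, eval_mulE he, ← hc, tcnt_add, tcnt_add]
    calc mulE e c (tcnt f0 eq.1 + tcnt f1 eq.1)
        = mulE e (mulE e c (tcnt f0 eq.1)) (tcnt f1 eq.1) := (mulE_add ..).symm
      _ = mulE e (mulE e c (tcnt f0 eq.2)) (tcnt f1 eq.1) := by rw [h0]
      _ = mulE e c (tcnt f1 eq.1 + tcnt f0 eq.2) := by rw [mulE_add, add_comm]
      _ = mulE e (mulE e c (tcnt f1 eq.1)) (tcnt f0 eq.2) := (mulE_add ..).symm
      _ = mulE e (mulE e c (tcnt f1 eq.2)) (tcnt f0 eq.2) := by rw [h1]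
      _ = mulE e c (tcnt f0 eq.2 + tcnt f1 eq.2) := by rw [mulE_add, add_comm]
  rw [Set.mem_iUnion] at hpBB
  obtain ⟨i, hi⟩ := hpBB
  have : mulE e (p0 i) ((f0 + f1) i) = a := hi
  have hval : (f0 + f1) i = 1 := by
    fin_cases i <;> simp [hf0, hf1]
  rw [hval] at this
  exact hae this


/-- Any nontrivial semigroup with a central element `e` satisfying `a·e ≠ a`
for some `a` is not an equational domain. Consequently: (1) no nontrivial
semigroup with zero is an equational domain; (2) no nontrivial commutative
semigroup is an equational domain; (3) a finite homogroup (the identity `e` of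
its kernel `K` is central) which is an equational domain coincides with its
kernel, i.e. is a group. -/
theorem center_not_eqDomain :
    (∀ (S : Type*) [Semigroup S] [Nontrivial S] (e a : S),
      (∀ s : S, e * s = s * e) → a * e ≠ a → ¬ IsEqDomain S (· * ·)) ∧
    (∀ (S : Type*) [Semigroup S] [Nontrivial S] (z : S),
      (∀ s : S, s * z = z ∧ z * s = z) → ¬ IsEqDomain S (· * ·)) ∧
    (∀ (S : Type*) [Semigroup S] [Nontrivial S],
      (∀ x y : S, x * y = y * x) → ¬ IsEqDomain S (· * ·)) ∧
    (∀ (S : Type*) [Semigroup S] [Fintype S] (K : Set S) (e : S),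
      (∀ s : S, ∀ k ∈ K, s * k ∈ K ∧ k * s ∈ K) → e ∈ K →
      (∀ s : S, e * s = s * e) → (∀ k ∈ K, k * e = k) →
      IsEqDomain S (· * ·) → ∀ a : S, a ∈ K) := by
  refine ⟨fun S _ _ e a he hae => part1 S e a he hae, ?_, ?_, ?_⟩
  · intro S _ _ z hz
    obtain ⟨x, y, hxy⟩ := exists_pair_ne S
    have hcent : ∀ s : S, z * s = s * z := fun s => (hz s).2.trans (hz s).1.symm
    by_cases hx : x = z
    · exact part1 S z y hcent (by rw [(hz y).1, ← hx]; exact hxy)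
    · exact part1 S z x hcent (by rw [(hz x).1]; exact fun h => hx h.symm)
  · intro S _ _ hcomm hED
    obtain ⟨x, y, hxy⟩ := exists_pair_ne S
    by_cases h : ∀ u v : S, v * u = v
    · exact hxy ((h y x).symm.trans (by rw [hcomm x y, h x y]))
    · push_neg at h
      obtain ⟨u, v, huv⟩ := h
      exact part1 S u v (fun s => hcomm u s) huv hED
  · intro S _ _ K e hK heK hec hke hED a
    have hall : ∀ b : S, b * e = b := by
      by_contra h
      push_neg at h
      obtain ⟨b, hb⟩ := h
      exact part1 S e b hec hb hED
    rw [← hall a]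
    exact (hK a e heK).1

end Stmt
end
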